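/- arXiv:1404.1067 — 2 statements merged into one kernel-verified Lean document; each statement's English description precedes it below -/
import Mathlib

section
/- A point (s,p) ∈ ℂ² lies in the symmetrized bidisc G_2 if and only if both roots of the polynomial z² - s·z + p lie in the open unit disc. -/
/-!
Every pair `(s, p)` is `(λ₁ + λ₂, λ₁ λ₂)` for the roots `λ₁, λ₂` of `z² - s z + p`, and then
`s - s̄ p = λ₁ (1 - |λ₂|²) + λ₂ (1 - |λ₁|²)`. With `a = |λ₁|`, `b = |λ₂|`, one has
`a (1 - b²) + b (1 - a²) + a² b² = 1 - (1 - a)(1 - b)(1 - a b)`. If both roots lie in the disc,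
the triangle inequality bounds `|s - s̄ p| + |p|²` by this quantity, which is `< 1`. Conversely, if
`|p| < 1` and `a ≥ 1`, then `b < 1`, and the reverse triangle inequality bounds `|s - s̄ p| + |p|²`
from below by the same quantity, which is now `≥ 1`.
-/

open Complex
open scoped ComplexConjugate

open Polynomial in
theorem exists_add_eq_and_mul_eq {K : Type*} [Field K] [IsAlgClosed K] (s p : K) :
    ∃ a b : K, a + b = s ∧ a * b = p := by
  have hdeg : degree (X ^ 2 - C s * X + C p) = 2 := by compute_degree!
  obtain ⟨a, ha⟩ := IsAlgClosed.exists_root _ (hdeg ▸ two_ne_zero)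
  refine ⟨a, s - a, by ring, ?_⟩
  simp only [IsRoot, eval_add, eval_sub, eval_mul, eval_pow, eval_X, eval_C] at ha
  linear_combination -ha

theorem mul_one_sub_sq_add_mul_one_sub_sq_add_mul_sq {R : Type*} [CommRing R] (a b : R) :
    a * (1 - b ^ 2) + b * (1 - a ^ 2) + (a * b) ^ 2 = 1 - (1 - a) * (1 - b) * (1 - a * b) := by
  ring

theorem add_sub_conj_add_mul_mul (a b : ℂ) :
    a + b - conj (a + b) * (a * b) = a * (1 - ‖b‖ ^ 2 : ℝ) + b * (1 - ‖a‖ ^ 2 : ℝ) := by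
  rw [map_add]
  push_cast
  linear_combination -a * mul_conj' b - b * mul_conj' a

theorem norm_add_sub_conj_add_mul_mul_add_sq_lt_one {a b : ℂ} (ha : ‖a‖ < 1) (hb : ‖b‖ < 1) :
    ‖a + b - conj (a + b) * (a * b)‖ + ‖a * b‖ ^ 2 < 1 := by
  have hab : ‖a‖ * ‖b‖ < 1 := mul_lt_one_of_nonneg_of_lt_one_left (norm_nonneg a) ha hb.le
  have hX : ‖a * ((1 - ‖b‖ ^ 2 : ℝ) : ℂ)‖ = ‖a‖ * (1 - ‖b‖ ^ 2) := by
    rw [norm_mul, norm_real, Real.norm_of_nonneg (by nlinarith [norm_nonneg b])]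
  have hY : ‖b * ((1 - ‖a‖ ^ 2 : ℝ) : ℂ)‖ = ‖b‖ * (1 - ‖a‖ ^ 2) := by
    rw [norm_mul, norm_real, Real.norm_of_nonneg (by nlinarith [norm_nonneg a])]
  have hpos : 0 < (1 - ‖a‖) * (1 - ‖b‖) * (1 - ‖a‖ * ‖b‖) := by
    apply mul_pos (mul_pos _ _) <;> linarith
  calc ‖a + b - conj (a + b) * (a * b)‖ + ‖a * b‖ ^ 2
      ≤ ‖a‖ * (1 - ‖b‖ ^ 2) + ‖b‖ * (1 - ‖a‖ ^ 2) + (‖a‖ * ‖b‖) ^ 2 := by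
        rw [add_sub_conj_add_mul_mul, norm_mul, ← hX, ← hY]
        gcongr
        exact norm_add_le _ _
    _ < 1 := by rw [mul_one_sub_sq_add_mul_one_sub_sq_add_mul_sq]; linarith

theorem norm_lt_one_of_norm_add_sub_conj_add_mul_mul_add_sq_lt_one {a b : ℂ}
    (h : ‖a + b - conj (a + b) * (a * b)‖ + ‖a * b‖ ^ 2 < 1) : ‖a‖ < 1 := by
  by_contra! ha
  have hab : ‖a‖ * ‖b‖ < 1 := by
    rw [← pow_lt_one_iff_of_nonneg (by positivity) two_ne_zero, ← norm_mul]
    linarith [norm_nonneg (a + b - conj (a + b) * (a * b))]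
  have hb : ‖b‖ < 1 := by nlinarith [norm_nonneg b]
  have hX : ‖a * ((1 - ‖b‖ ^ 2 : ℝ) : ℂ)‖ = ‖a‖ * (1 - ‖b‖ ^ 2) := by
    rw [norm_mul, norm_real, Real.norm_of_nonneg (by nlinarith [norm_nonneg b])]
  have hY : ‖b * ((1 - ‖a‖ ^ 2 : ℝ) : ℂ)‖ = -(‖b‖ * (1 - ‖a‖ ^ 2)) := by
    rw [norm_mul, norm_real, Real.norm_of_nonpos (by nlinarith), mul_neg]
  have hnonpos : (1 - ‖a‖) * (1 - ‖b‖) * (1 - ‖a‖ * ‖b‖) ≤ 0 := by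
    apply mul_nonpos_of_nonpos_of_nonneg (mul_nonpos_of_nonpos_of_nonneg _ _) <;> linarith
  have := calc 1 - (1 - ‖a‖) * (1 - ‖b‖) * (1 - ‖a‖ * ‖b‖)
      = ‖a‖ * (1 - ‖b‖ ^ 2) + ‖b‖ * (1 - ‖a‖ ^ 2) + (‖a‖ * ‖b‖) ^ 2 :=
        (mul_one_sub_sq_add_mul_one_sub_sq_add_mul_sq _ _).symm
    _ ≤ ‖a + b - conj (a + b) * (a * b)‖ + ‖a * b‖ ^ 2 := by
        rw [add_sub_conj_add_mul_mul, norm_mul, ← sub_neg_eq_add (‖a‖ * _), ← hX, ← hY]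
        gcongr
        exact norm_sub_le_norm_add _ _
  linarith

theorem norm_lt_one_and_norm_lt_one_iff (a b : ℂ) :
    ‖a‖ < 1 ∧ ‖b‖ < 1 ↔ ‖a + b - conj (a + b) * (a * b)‖ + ‖a * b‖ ^ 2 < 1 := by
  refine ⟨fun ⟨ha, hb⟩ ↦ norm_add_sub_conj_add_mul_mul_add_sq_lt_one ha hb, fun h ↦ ?_⟩
  refine ⟨norm_lt_one_of_norm_add_sub_conj_add_mul_mul_add_sq_lt_one h, ?_⟩
  rw [add_comm a, mul_comm a] at h
  exact norm_lt_one_of_norm_add_sub_conj_add_mul_mul_add_sq_lt_one h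

/-- `(s,p)` lies in the symmetrized bidisc iff both roots of `z² - s z + p` lie in `𝔻`. -/
theorem mem_symmetrized_bidisc_iff_roots (s p : ℂ) :
    ‖s - conj s * p‖ + ‖p‖ ^ 2 < 1 ↔
      ∃ l1 l2 : ℂ, ‖l1‖ < 1 ∧ ‖l2‖ < 1 ∧
        ∀ z : ℂ, z ^ 2 - s * z + p = (z - l1) * (z - l2) := by
  constructor
  · intro h
    obtain ⟨l1, l2, rfl, rfl⟩ := exists_add_eq_and_mul_eq s p
    obtain ⟨h1, h2⟩ := (norm_lt_one_and_norm_lt_one_iff l1 l2).2 h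
    exact ⟨l1, l2, h1, h2, fun z ↦ by ring⟩
  · rintro ⟨l1, l2, h1, h2, hfactor⟩
    have hp : p = l1 * l2 := by linear_combination hfactor 0
    have hs : s = l1 + l2 := by linear_combination hfactor 0 - hfactor 1
    rw [hs, hp]
    exact (norm_lt_one_and_norm_lt_one_iff l1 l2).1 ⟨h1, h2⟩
end

section
/- Let ψ₁₁, ψ₂₂, ψ₁₂, ψ₂₁ : 𝔻 → ℂ be holomorphic with the matrix (ψ_{ij}(λ)) of operator norm at most 1 for all λ, and suppose ψ₁₁ = B₁h, ψ₂₂ = B₂h for finite Blaschke products (or unimodular constants) B₁, B₂ and a holomorphic h. Then the matrix function λ ↦ [[h(λ), ψ₁₂(λ)],[ψ₂₁(λ), B₁(λ)B₂(λ)h(λ)]] also takes values in the closed operator-norm unit ball, has the same trace-symmetrized image under π∘(swap of columns), i.e. the same (off-diagonal-swapped trace, determinant) pair, and satisfies |B₁B₂h| ≤ |h| on 𝔻. -/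
open Complex Metric Set Matrix
open scoped ComplexConjugate Matrix.Norms.L2Operator

/-- `B` is a finite Blaschke product (a unimodular constant when the degree is `0`). -/
def IsFiniteBlaschke (B : ℂ → ℂ) : Prop :=
  ∃ (d : ℕ) (ω : ℂ) (a : Fin d → ℂ), ‖ω‖ = 1 ∧
    (∀ j, ‖a j‖ < 1) ∧
    ∀ z : ℂ, B z = ω * ∏ j, (z - a j) / (1 - conj (a j) * z)

/-- The column-swap operation `x ↦ xᵗ` of the paper: `[[a,b],[c,d]] ↦ [[b,a],[d,c]]`. -/
def colSwap (x : Matrix (Fin 2) (Fin 2) ℂ) : Matrix (Fin 2) (Fin 2) ℂ :=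
  Matrix.of ![![x 0 1, x 0 0], ![x 1 1, x 1 0]]

/-!
With `D = diag(1, B₁)` one has `D Ψ D = B₁ • M`, where `M` is the rebalanced matrix; since
`‖D‖ ≤ 1`, this gives `‖B₁ • M‖ ≤ 1` on `𝔻`. A bound of this form survives division by a finite
Blaschke product, one factor at a time: a disc automorphism moves the zero of the factor to the
origin, and the Schwarz lemma for `z • F z` then bounds `F`. Trace and determinant are unchanged
by direct computation, and `|B₁ B₂| ≤ 1` on `𝔻`.
-/

noncomputable def blaschkeFactor (a z : ℂ) : ℂ := (z - a) / (1 - conj a * z)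

section BlaschkeFactor

variable {a z : ℂ}

lemma one_sub_conj_mul_ne_zero (ha : ‖a‖ < 1) (hz : ‖z‖ ≤ 1) : 1 - conj a * z ≠ 0 := by
  have : ‖conj a * z‖ < 1 := by
    rw [norm_mul, Complex.norm_conj]
    nlinarith [norm_nonneg a, norm_nonneg z]
  intro h
  rw [← sub_eq_zero.mp h, norm_one] at this
  exact this.false

lemma normSq_one_sub_conj_mul_sub_normSq_sub (a z : ℂ) :
    normSq (1 - conj a * z) - normSq (z - a) = (1 - normSq a) * (1 - normSq z) := by
  simp only [normSq_apply, sub_re, sub_im, mul_re, mul_im, conj_re, conj_im, one_re, one_im]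
  ring

lemma norm_blaschkeFactor_lt_one (ha : ‖a‖ < 1) (hz : ‖z‖ < 1) : ‖blaschkeFactor a z‖ < 1 := by
  have hden := one_sub_conj_mul_ne_zero ha hz.le
  rw [blaschkeFactor, norm_div, div_lt_one (norm_pos_iff.mpr hden), ← sq_lt_sq₀ (by positivity)
    (by positivity), Complex.sq_norm, Complex.sq_norm, ← sub_pos,
    normSq_one_sub_conj_mul_sub_normSq_sub, ← Complex.sq_norm, ← Complex.sq_norm]
  have := sq_lt_one_iff₀ (norm_nonneg a) |>.mpr ha
  have := sq_lt_one_iff₀ (norm_nonneg z) |>.mpr hz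
  apply mul_pos <;> linarith

lemma mapsTo_blaschkeFactor (ha : ‖a‖ < 1) :
    MapsTo (blaschkeFactor a) (ball 0 1) (ball 0 1) := fun z hz => by
  rw [mem_ball_zero_iff] at hz ⊢
  exact norm_blaschkeFactor_lt_one ha hz

lemma blaschkeFactor_blaschkeFactor_neg (ha : ‖a‖ < 1) (hz : ‖z‖ < 1) :
    blaschkeFactor a (blaschkeFactor (-a) z) = z := by
  have h₁ : 1 + conj a * z ≠ 0 := by
    simpa using one_sub_conj_mul_ne_zero (a := -a) (by simpa using ha) hz.le
  have h₂ : 1 - conj a * a ≠ 0 := one_sub_conj_mul_ne_zero ha ha.le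
  have hnum : (z + a) / (1 + conj a * z) - a = z * (1 - conj a * a) / (1 + conj a * z) := by
    rw [eq_div_iff h₁, sub_mul, div_mul_cancel₀ _ h₁]
    ring
  have hden : 1 - conj a * ((z + a) / (1 + conj a * z)) = (1 - conj a * a) / (1 + conj a * z) := by
    rw [eq_div_iff h₁, sub_mul, one_mul, mul_assoc, div_mul_cancel₀ _ h₁]
    ring
  simp only [blaschkeFactor, map_neg, neg_mul, sub_neg_eq_add]
  rw [hnum, hden, div_div_div_cancel_right₀ h₁, mul_div_cancel_right₀ _ h₂]

lemma differentiableOn_blaschkeFactor (ha : ‖a‖ < 1) :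
    DifferentiableOn ℂ (blaschkeFactor a) (ball 0 1) :=
  ((differentiable_id.sub_const a).differentiableOn).div (by fun_prop) fun z hz =>
    one_sub_conj_mul_ne_zero ha (mem_ball_zero_iff.mp hz).le

end BlaschkeFactor

section Division

variable {E : Type*} [NormedAddCommGroup E] [NormedSpace ℂ E]

/-- The Schwarz lemma for `z ↦ z • F z`, whose slope at `0` is `F`. -/
lemma norm_le_one_of_norm_smul_le_one {F : ℂ → E} (hF : DifferentiableOn ℂ F (ball 0 1))
    (hb : ∀ z ∈ ball (0 : ℂ) 1, ‖z • F z‖ ≤ 1) {z : ℂ} (hz : z ∈ ball (0 : ℂ) 1) :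
    ‖F z‖ ≤ 1 := by
  have hmaps : MapsTo (fun w : ℂ => (w - 0) • F w) (ball 0 1) (closedBall ((0 - 0 : ℂ) • F 0) 1) :=
    fun w hw => by simpa using hb w hw
  have hd : DifferentiableOn ℂ (fun w : ℂ => (w - 0) • F w) (ball 0 1) :=
    (differentiableOn_id.sub_const 0).smul hF
  have hschwarz := norm_dslope_le_div_of_mapsTo_ball hd hmaps hz
  rcases eq_or_ne z 0 with rfl | hz0
  · have hF0 := (hF.differentiableAt (ball_mem_nhds 0 one_pos)).hasDerivAt
    have hderiv : HasDerivAt (fun w : ℂ => (w - 0) • F w) (F 0) 0 := by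
      simpa using (hasDerivAt_id' (0 : ℂ)).fun_smul hF0
    rw [dslope_same, hderiv.deriv] at hschwarz
    simpa using hschwarz
  · rw [dslope_sub_smul_of_ne F hz0] at hschwarz
    simpa using hschwarz

/-- Composing with the disc automorphism `blaschkeFactor (-a)` turns the factor into `z`. -/
lemma norm_le_one_of_norm_blaschkeFactor_smul_le_one {a : ℂ} (ha : ‖a‖ < 1) {g : ℂ → E}
    (hg : DifferentiableOn ℂ g (ball 0 1))
    (hb : ∀ z ∈ ball (0 : ℂ) 1, ‖blaschkeFactor a z • g z‖ ≤ 1) {z : ℂ}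
    (hz : z ∈ ball (0 : ℂ) 1) : ‖g z‖ ≤ 1 := by
  have hna : ‖-a‖ < 1 := by simpa using ha
  have hmaps := mapsTo_blaschkeFactor hna
  have key := norm_le_one_of_norm_smul_le_one (F := g ∘ blaschkeFactor (-a))
    (hg.comp (differentiableOn_blaschkeFactor hna) hmaps) (fun w hw => by
      simpa [blaschkeFactor_blaschkeFactor_neg ha (mem_ball_zero_iff.mp hw)] using
        hb _ (hmaps hw)) (mapsTo_blaschkeFactor ha hz)
  have hinv := blaschkeFactor_blaschkeFactor_neg hna (mem_ball_zero_iff.mp hz)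
  rw [neg_neg] at hinv
  simpa [hinv] using key

lemma norm_le_one_of_norm_prod_blaschkeFactor_smul_le_one {ι : Type*} (s : Finset ι)
    {a : ι → ℂ} (ha : ∀ j, ‖a j‖ < 1) {f : ℂ → E} (hf : DifferentiableOn ℂ f (ball 0 1))
    (hb : ∀ z ∈ ball (0 : ℂ) 1, ‖(∏ j ∈ s, blaschkeFactor (a j) z) • f z‖ ≤ 1) :
    ∀ z ∈ ball (0 : ℂ) 1, ‖f z‖ ≤ 1 := by
  induction s using Finset.cons_induction with
  | empty => simpa using hb
  | cons j s hj ih =>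
    refine ih fun z hz => norm_le_one_of_norm_blaschkeFactor_smul_le_one (ha j)
      ((DifferentiableOn.fun_finsetProd fun i _ => differentiableOn_blaschkeFactor (ha i)).smul hf)
      (fun w hw => ?_) hz
    simpa [Finset.prod_cons, mul_smul] using hb w hw

end Division

namespace IsFiniteBlaschke

variable {B : ℂ → ℂ}

lemma differentiableOn (hB : IsFiniteBlaschke B) : DifferentiableOn ℂ B (ball 0 1) := by
  obtain ⟨d, ω, a, -, ha, hB⟩ := hB
  rw [funext hB]
  exact (DifferentiableOn.fun_finsetProd fun j _ =>
    differentiableOn_blaschkeFactor (ha j)).const_mul ω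

lemma norm_le_one (hB : IsFiniteBlaschke B) {z : ℂ} (hz : z ∈ ball (0 : ℂ) 1) : ‖B z‖ ≤ 1 := by
  obtain ⟨d, ω, a, hω, ha, hB⟩ := hB
  rw [hB, norm_mul, hω, one_mul, norm_prod]
  exact Finset.prod_le_one (fun j _ => norm_nonneg _) fun j _ =>
    (norm_blaschkeFactor_lt_one (ha j) (mem_ball_zero_iff.mp hz)).le

lemma norm_le_one_of_norm_smul_le_one {E : Type*} [NormedAddCommGroup E] [NormedSpace ℂ E]
    (hB : IsFiniteBlaschke B) {f : ℂ → E} (hf : DifferentiableOn ℂ f (ball 0 1))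
    (hb : ∀ z ∈ ball (0 : ℂ) 1, ‖B z • f z‖ ≤ 1) : ∀ z ∈ ball (0 : ℂ) 1, ‖f z‖ ≤ 1 := by
  obtain ⟨d, ω, a, hω, ha, hB⟩ := hB
  refine norm_le_one_of_norm_prod_blaschkeFactor_smul_le_one Finset.univ ha hf fun z hz => ?_
  have := hb z hz
  rwa [hB, mul_smul, norm_smul, hω, one_mul] at this

end IsFiniteBlaschke

section Matrix

variable {𝕜 : Type*} [RCLike 𝕜]

lemma Matrix.differentiableOn_of_forall_apply {m n : Type*} [Fintype m] [Fintype n]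
    [DecidableEq m] [DecidableEq n] {f : 𝕜 → Matrix m n 𝕜} {s : Set 𝕜}
    (hf : ∀ i j, DifferentiableOn 𝕜 (fun z => f z i j) s) : DifferentiableOn 𝕜 f s := by
  have hsum : f = fun z => ∑ i, ∑ j, f z i j • single i j (1 : 𝕜) := by
    simp_rw [smul_single, smul_eq_mul, mul_one]
    exact funext fun z => matrix_eq_sum_single (f z)
  rw [hsum]
  exact DifferentiableOn.fun_sum fun i _ => DifferentiableOn.fun_sum fun j _ =>
    (hf i j).smul_const _

lemma diagonal_mul_mul_diagonal_eq_smul {R : Type*} [CommRing R] (b c p q r : R) :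
    diagonal ![1, b] * !![b * p, q; r, c * p] * diagonal ![1, b] = b • !![p, q; r, b * c * p] := by
  ext i j
  fin_cases i <;> fin_cases j <;> simp [Matrix.mul_apply, Fin.sum_univ_two] <;> ring

lemma norm_smul_rebalanced_le_one {b c p q r : 𝕜} (hb : ‖b‖ ≤ 1)
    (hΨ : ‖!![b * p, q; r, c * p]‖ ≤ 1) : ‖b • !![p, q; r, b * c * p]‖ ≤ 1 := by
  have hD : ‖(diagonal ![1, b] : Matrix (Fin 2) (Fin 2) 𝕜)‖ ≤ 1 := by
    rw [l2_opNorm_diagonal, pi_norm_le_iff_of_nonneg zero_le_one, Fin.forall_fin_two]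
    simpa using hb
  rw [← diagonal_mul_mul_diagonal_eq_smul]
  calc _ ≤ ‖(diagonal ![1, b] : Matrix (Fin 2) (Fin 2) 𝕜)‖ * ‖!![b * p, q; r, c * p]‖ *
        ‖(diagonal ![1, b] : Matrix (Fin 2) (Fin 2) 𝕜)‖ :=
        (l2_opNorm_mul _ _).trans (mul_le_mul_of_nonneg_right (l2_opNorm_mul _ _) (norm_nonneg _))
    _ ≤ 1 := mul_le_one₀ (mul_le_one₀ hD (norm_nonneg _) hΨ) (norm_nonneg _) hD

end Matrix

theorem diagonal_rebalancing_general (ψ11 ψ22 ψ12 ψ21 h B1 B2 : ℂ → ℂ)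
    (hψ12 : DifferentiableOn ℂ ψ12 (ball (0 : ℂ) 1))
    (hψ21 : DifferentiableOn ℂ ψ21 (ball (0 : ℂ) 1))
    (hh : DifferentiableOn ℂ h (ball (0 : ℂ) 1))
    (hnorm : ∀ l ∈ ball (0 : ℂ) 1, ‖Matrix.of ![![ψ11 l, ψ12 l], ![ψ21 l, ψ22 l]]‖ ≤ 1)
    (hB1 : IsFiniteBlaschke B1) (hB2 : IsFiniteBlaschke B2)
    (h11 : ∀ l ∈ ball (0 : ℂ) 1, ψ11 l = B1 l * h l)
    (h22 : ∀ l ∈ ball (0 : ℂ) 1, ψ22 l = B2 l * h l) :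
    ∀ l ∈ ball (0 : ℂ) 1,
      ‖Matrix.of ![![h l, ψ12 l], ![ψ21 l, B1 l * B2 l * h l]]‖ ≤ 1 ∧
      (colSwap (Matrix.of ![![h l, ψ12 l], ![ψ21 l, B1 l * B2 l * h l]])).trace =
        (colSwap (Matrix.of ![![ψ11 l, ψ12 l], ![ψ21 l, ψ22 l]])).trace ∧
      (colSwap (Matrix.of ![![h l, ψ12 l], ![ψ21 l, B1 l * B2 l * h l]])).det =
        (colSwap (Matrix.of ![![ψ11 l, ψ12 l], ![ψ21 l, ψ22 l]])).det ∧
      ‖B1 l * B2 l * h l‖ ≤ ‖h l‖ := by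
  have hM : DifferentiableOn ℂ
      (fun l => Matrix.of ![![h l, ψ12 l], ![ψ21 l, B1 l * B2 l * h l]]) (ball 0 1) := by
    refine Matrix.differentiableOn_of_forall_apply fun i j => ?_
    fin_cases i <;> fin_cases j
    exacts [hh, hψ12, hψ21, (hB1.differentiableOn.mul hB2.differentiableOn).mul hh]
  have hnormM := hB1.norm_le_one_of_norm_smul_le_one hM fun l hl => by
    refine norm_smul_rebalanced_le_one (hB1.norm_le_one hl) ?_
    simpa only [h11 l hl, h22 l hl] using hnorm l hl
  intro l hl
  refine ⟨hnormM l hl, by simp [colSwap, trace_fin_two], ?_, ?_⟩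
  · simp only [colSwap, det_fin_two_of, of_apply, cons_val', cons_val_zero, cons_val_one,
      empty_val', cons_val_fin_one, h11 l hl, h22 l hl]
    ring
  · rw [norm_mul, norm_mul]
    exact mul_le_of_le_one_left (norm_nonneg _)
      (mul_le_one₀ (hB1.norm_le_one hl) (norm_nonneg _) (hB2.norm_le_one hl))

/-- Replacing the diagonal `(B₁h, B₂h)` of a closed-ball-valued holomorphic matrix function
by `(h, B₁B₂h)` again lands in the closed unit ball, leaves the column-swapped
(trace, determinant) pair unchanged, and satisfies `|B₁B₂h| ≤ |h|` on `𝔻`. -/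
theorem diagonal_rebalancing (ψ11 ψ22 ψ12 ψ21 h B1 B2 : ℂ → ℂ)
    (hψ11 : DifferentiableOn ℂ ψ11 (ball (0 : ℂ) 1))
    (hψ22 : DifferentiableOn ℂ ψ22 (ball (0 : ℂ) 1))
    (hψ12 : DifferentiableOn ℂ ψ12 (ball (0 : ℂ) 1))
    (hψ21 : DifferentiableOn ℂ ψ21 (ball (0 : ℂ) 1))
    (hh : DifferentiableOn ℂ h (ball (0 : ℂ) 1))
    (hnorm : ∀ l ∈ ball (0 : ℂ) 1, ‖Matrix.of ![![ψ11 l, ψ12 l], ![ψ21 l, ψ22 l]]‖ ≤ 1)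
    (hB1 : IsFiniteBlaschke B1) (hB2 : IsFiniteBlaschke B2)
    (h11 : ∀ l ∈ ball (0 : ℂ) 1, ψ11 l = B1 l * h l)
    (h22 : ∀ l ∈ ball (0 : ℂ) 1, ψ22 l = B2 l * h l) :
    ∀ l ∈ ball (0 : ℂ) 1,
      ‖Matrix.of ![![h l, ψ12 l], ![ψ21 l, B1 l * B2 l * h l]]‖ ≤ 1 ∧
      (colSwap (Matrix.of ![![h l, ψ12 l], ![ψ21 l, B1 l * B2 l * h l]])).trace =
        (colSwap (Matrix.of ![![ψ11 l, ψ12 l], ![ψ21 l, ψ22 l]])).trace ∧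
      (colSwap (Matrix.of ![![h l, ψ12 l], ![ψ21 l, B1 l * B2 l * h l]])).det =
        (colSwap (Matrix.of ![![ψ11 l, ψ12 l], ![ψ21 l, ψ22 l]])).det ∧
      ‖B1 l * B2 l * h l‖ ≤ ‖h l‖ :=
  diagonal_rebalancing_general ψ11 ψ22 ψ12 ψ21 h B1 B2 hψ12 hψ21 hh hnorm hB1 hB2 h11 h22
end
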